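/- arXiv:2403.12633 — 2 statements merged into one kernel-verified Lean document; each statement's English description precedes it below -/
import Mathlib

section
/- The state transition matrix of the LTV system ẋ = A(t) x, with A(t) the 12×12 block matrix having -[ω(t)]_× on each of the four diagonal 3×3 blocks, I₃ on the (1,2) and (2,3) blocks and zeros elsewhere, is φ(t,s) = T(t)ᵀ exp(Ā(t-s)) T(s), where T(t) = blkdiag(R(t),R(t),R(t),R(t)) with Ṙ = R[ω]_× and Ā as the constant matrix with I₃ on the (1,2) and (2,3) blocks only. That is, φ satisfies d/dt φ(t,s) = A(t)φ(t,s) and φ(s,s) = I₁₂. -/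
open Matrix

attribute [local instance] Matrix.normedAddCommGroup Matrix.normedSpace

/-- The skew-symmetric matrix `[ω]×` of the cross product. -/
def skewMat (ω : Fin 3 → ℝ) : Matrix (Fin 3) (Fin 3) ℝ :=
  !![0, -ω 2, ω 1; ω 2, 0, -ω 0; -ω 1, ω 0, 0]

/-- `blkdiag(M, M, M, M)`. -/
def blkDiag4 (M : Matrix (Fin 3) (Fin 3) ℝ) :
    Matrix (Fin 4 × Fin 3) (Fin 4 × Fin 3) ℝ :=
  Matrix.of fun p q => if p.1 = q.1 then M p.2 q.2 else 0

/-- The constant matrix `Ā` with `I₃` on the (1,2) and (2,3) blocks only. -/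
def Abar : Matrix (Fin 4 × Fin 3) (Fin 4 × Fin 3) ℝ :=
  Matrix.of fun p q =>
    if ((p.1 = 0 ∧ q.1 = 1) ∨ (p.1 = 1 ∧ q.1 = 2)) ∧ p.2 = q.2 then 1 else 0

/-! With `T(t) = I₄ ⊗ R(t)` and `Ā = N ⊗ I₃` (`N` the nilpotent shift of the block indices),
`Ā` commutes with every `I₄ ⊗ M`. Since `[ω]×` is skew, `Ṙᵀ = -[ω]× Rᵀ`, hence
`d/dt T(t)ᵀ = blkdiag(-[ω]×) T(t)ᵀ`, while `d/dt exp((t-s)Ā) = Ā exp((t-s)Ā)`. The product rule and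
`T(t)ᵀ Ā = Ā T(t)ᵀ` give `φ̇ = (blkdiag(-[ω]×) + Ā) φ`; at `t = s` the exponential is `1` and
`RᵀR = 1`. -/

open scoped Kronecker

theorem HasDerivAt.linearMap_comp {E F : Type*} [NormedAddCommGroup E] [NormedSpace ℝ E]
    [FiniteDimensional ℝ E] [NormedAddCommGroup F] [NormedSpace ℝ F] {f : ℝ → E} {f' : E}
    {t : ℝ} (hf : HasDerivAt f f' t) (L : E →ₗ[ℝ] F) :
    HasDerivAt (fun τ => L (f τ)) (L f') t :=
  L.toContinuousLinearMap.hasFDerivAt.comp_hasDerivAt t hf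

section MatrixCalculus

variable {m n : Type*} [Fintype m] [Fintype n]

theorem HasDerivAt.matrix_transpose {f : ℝ → Matrix m n ℝ} {f' : Matrix m n ℝ} {t : ℝ}
    (hf : HasDerivAt f f' t) : HasDerivAt (fun τ => (f τ)ᵀ) f'ᵀ t :=
  hf.linearMap_comp (transposeLinearEquiv m n ℝ ℝ).toLinearMap

theorem HasDerivAt.one_kronecker [DecidableEq m] {f : ℝ → Matrix n n ℝ} {f' : Matrix n n ℝ}
    {t : ℝ} (hf : HasDerivAt f f' t) :
    HasDerivAt (fun τ => (1 : Matrix m m ℝ) ⊗ₖ f τ) (1 ⊗ₖ f') t :=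
  hf.linearMap_comp (kroneckerBilinear (R := ℝ) (1 : Matrix m m ℝ))

variable [DecidableEq n]

/- The ambient entrywise sup norm on matrices is not submultiplicative; the two lemmas below
borrow the `ℓ∞`-operator norm, which induces the same topology, to use Banach-algebra calculus. -/

theorem HasDerivAt.matrix_mul {f g : ℝ → Matrix n n ℝ} {f' g' : Matrix n n ℝ} {t : ℝ}
    (hf : HasDerivAt f f' t) (hg : HasDerivAt g g' t) :
    HasDerivAt (fun τ => f τ * g τ) (f' * g t + f t * g') t :=
  letI := Matrix.linftyOpNormedRing (n := n) (α := ℝ)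
  letI := Matrix.linftyOpNormedAlgebra (n := n) (R := ℝ) (α := ℝ)
  hf.fun_mul hg

theorem hasDerivAt_exp_sub_smul (A : Matrix n n ℝ) (s t : ℝ) :
    HasDerivAt (fun τ => NormedSpace.exp ((τ - s) • A)) (A * NormedSpace.exp ((t - s) • A)) t :=
  letI := Matrix.linftyOpNormedRing (n := n) (α := ℝ)
  letI := Matrix.linftyOpNormedAlgebra (n := n) (R := ℝ) (α := ℝ)
  (@hasDerivAt_exp_smul_const' ℝ (Matrix n n ℝ) _ _ _
    (FiniteDimensional.complete ℝ _) A (t - s)).comp_sub_const t s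

end MatrixCalculus

theorem Matrix.commute_kronecker_one_one_kronecker {α l n : Type*} [CommSemiring α]
    [Fintype l] [DecidableEq l] [Fintype n] [DecidableEq n] (A : Matrix l l α)
    (B : Matrix n n α) : Commute (A ⊗ₖ (1 : Matrix n n α)) ((1 : Matrix l l α) ⊗ₖ B) := by
  simp only [Commute, SemiconjBy, ← mul_kronecker_mul, mul_one, one_mul]

theorem blkDiag4_eq_one_kronecker (M : Matrix (Fin 3) (Fin 3) ℝ) : blkDiag4 M = 1 ⊗ₖ M := by
  ext ⟨i, a⟩ ⟨j, b⟩
  simp [blkDiag4, one_apply]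

theorem Abar_eq_kronecker_one :
    Abar = !![0, 1, 0, 0; 0, 0, 1, 0; 0, 0, 0, 0; 0, 0, 0, 0] ⊗ₖ
      (1 : Matrix (Fin 3) (Fin 3) ℝ) := by
  ext ⟨i, a⟩ ⟨j, b⟩
  fin_cases i <;> fin_cases j <;> simp [Abar, one_apply]

theorem Abar_commute_blkDiag4 (M : Matrix (Fin 3) (Fin 3) ℝ) : Commute Abar (blkDiag4 M) := by
  rw [Abar_eq_kronecker_one, blkDiag4_eq_one_kronecker]
  exact commute_kronecker_one_one_kronecker _ _

theorem blkDiag4_mul (A B : Matrix (Fin 3) (Fin 3) ℝ) :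
    blkDiag4 A * blkDiag4 B = blkDiag4 (A * B) := by
  simp only [blkDiag4_eq_one_kronecker, ← mul_kronecker_mul, mul_one]

theorem blkDiag4_transpose (M : Matrix (Fin 3) (Fin 3) ℝ) : (blkDiag4 M)ᵀ = blkDiag4 Mᵀ := by
  ext ⟨i, a⟩ ⟨j, b⟩
  simp [blkDiag4, eq_comm]

theorem blkDiag4_one : blkDiag4 1 = 1 := by
  rw [blkDiag4_eq_one_kronecker, one_kronecker_one]

theorem HasDerivAt.blkDiag4 {f : ℝ → Matrix (Fin 3) (Fin 3) ℝ} {f' : Matrix (Fin 3) (Fin 3) ℝ}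
    {t : ℝ} (hf : HasDerivAt f f' t) : HasDerivAt (fun τ => blkDiag4 (f τ)) (blkDiag4 f') t := by
  simpa only [blkDiag4_eq_one_kronecker] using hf.one_kronecker

theorem skewMat_transpose (w : Fin 3 → ℝ) : (skewMat w)ᵀ = -skewMat w := by
  ext i j
  fin_cases i <;> fin_cases j <;> simp [skewMat]

theorem hasDerivAt_transpose_of_hasDerivAt_mul_skewMat {R : ℝ → Matrix (Fin 3) (Fin 3) ℝ}
    {w : Fin 3 → ℝ} {t : ℝ} (hR : HasDerivAt R (R t * skewMat w) t) :
    HasDerivAt (fun τ => (R τ)ᵀ) (-skewMat w * (R t)ᵀ) t := by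
  simpa [transpose_mul, skewMat_transpose] using hR.matrix_transpose

theorem state_transition_matrix_general
    (R : ℝ → Matrix (Fin 3) (Fin 3) ℝ) (ω : ℝ → (Fin 3 → ℝ))
    (hSO2 : ∀ t, (R t)ᵀ * R t = 1)
    (hR : ∀ t, HasDerivAt R (R t * skewMat (ω t)) t)
    (φ : ℝ → ℝ → Matrix (Fin 4 × Fin 3) (Fin 4 × Fin 3) ℝ)
    (hφ : ∀ t s, φ t s =
      (blkDiag4 (R t))ᵀ * NormedSpace.exp ((t - s) • Abar) * blkDiag4 (R s)) :
    ∀ s : ℝ, (∀ t : ℝ, HasDerivAt (fun τ => φ τ s)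
        ((blkDiag4 (-(skewMat (ω t))) + Abar) * φ t s) t) ∧
      φ s s = 1 := by
  intro s
  refine ⟨fun t => ?_, ?_⟩
  · have hT : HasDerivAt (fun τ => (blkDiag4 (R τ))ᵀ)
        (blkDiag4 (-skewMat (ω t)) * (blkDiag4 (R t))ᵀ) t := by
      simpa only [blkDiag4_transpose, blkDiag4_mul] using
        (hasDerivAt_transpose_of_hasDerivAt_mul_skewMat (hR t)).blkDiag4
    have hφ' := (hT.matrix_mul (hasDerivAt_exp_sub_smul Abar s t)).matrix_mul
      (hasDerivAt_const t (blkDiag4 (R s)))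
    simp only [hφ]
    convert hφ' using 1
    rw [mul_zero, add_zero, blkDiag4_transpose, ← mul_assoc _ Abar,
      ← (Abar_commute_blkDiag4 _).eq]
    noncomm_ring
  · rw [hφ, sub_self, zero_smul, NormedSpace.exp_zero, mul_one, blkDiag4_transpose,
      blkDiag4_mul, hSO2, blkDiag4_one]

/-- The state transition matrix of `ẋ = A(t)x`, with
`A(t) = blkdiag(-[ω]×,…,-[ω]×) + Ā`, is `φ(t,s) = T(t)ᵀ exp(Ā(t-s)) T(s)` where
`T(t) = blkdiag(R(t),…,R(t))` and `Ṙ = R[ω]×`:  it satisfies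
`d/dt φ(t,s) = A(t) φ(t,s)` and `φ(s,s) = I₁₂`. -/
theorem state_transition_matrix
    (R : ℝ → Matrix (Fin 3) (Fin 3) ℝ) (ω : ℝ → (Fin 3 → ℝ))
    (hSO1 : ∀ t, R t * (R t)ᵀ = 1) (hSO2 : ∀ t, (R t)ᵀ * R t = 1)
    (hSO3 : ∀ t, (R t).det = 1)
    (hR : ∀ t, HasDerivAt R (R t * skewMat (ω t)) t)
    (φ : ℝ → ℝ → Matrix (Fin 4 × Fin 3) (Fin 4 × Fin 3) ℝ)
    (hφ : ∀ t s, φ t s =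
      (blkDiag4 (R t))ᵀ * NormedSpace.exp ((t - s) • Abar) * blkDiag4 (R s)) :
    ∀ s : ℝ, (∀ t : ℝ, HasDerivAt (fun τ => φ τ s)
        ((blkDiag4 (-(skewMat (ω t))) + Abar) * φ t s) t) ∧
      φ s s = 1 :=
  state_transition_matrix_general R ω hSO2 hR φ hφ
end

section
/- Let g^I, m^I ∈ R^3 be noncollinear nonzero vectors and R ∈ SO(3). Define g^B = Rᵀ g^I and m^B = Rᵀ m^I. Then the matrix product M(g^B, m^B) · M(g^I, m^I)ᵀ equals Rᵀ, where M(g,m) is the matrix with columns g/‖g‖, (g×m)/‖g×m‖, g×(g×m)/‖g×(g×m)‖. In other words, the attitude reconstruction formula recovers R exactly from exact body-frame measurements. -/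
open Matrix

/-- The matrix with columns `g/‖g‖`, `(g×m)/‖g×m‖` and `g×(g×m)/‖g×(g×m)‖`. -/
noncomputable def triad (g m : Fin 3 → ℝ) : Matrix (Fin 3) (Fin 3) ℝ :=
  Matrix.of fun i j =>
    ![(Real.sqrt (g ⬝ᵥ g))⁻¹ • g,
      (Real.sqrt (crossProduct g m ⬝ᵥ crossProduct g m))⁻¹ • crossProduct g m,
      (Real.sqrt (crossProduct g (crossProduct g m) ⬝ᵥ
          crossProduct g (crossProduct g m)))⁻¹ •
        crossProduct g (crossProduct g m)] j i

lemma cross_adjugate' (A : Matrix (Fin 3) (Fin 3) ℝ) (u v : Fin 3 → ℝ) :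
    crossProduct (A.mulVec u) (A.mulVec v) = (A.adjugate)ᵀ.mulVec (crossProduct u v) := by
  funext i
  fin_cases i <;>
    simp [cross_apply, mulVec, dotProduct, Fin.sum_univ_three, Matrix.adjugate_fin_three,
      Matrix.transpose_apply] <;> ring

lemma cross_rot' (A : Matrix (Fin 3) (Fin 3) ℝ) (hA : Aᵀ * A = 1) (hdet : A.det = 1)
    (u v : Fin 3 → ℝ) :
    crossProduct (A.mulVec u) (A.mulVec v) = A.mulVec (crossProduct u v) := by
  have h1 : A * A.adjugate = 1 := by rw [Matrix.mul_adjugate, hdet, one_smul]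
  have hadj : A.adjugate = Aᵀ := by
    calc A.adjugate = (Aᵀ * A) * A.adjugate := by rw [hA, one_mul]
      _ = Aᵀ * (A * A.adjugate) := by rw [mul_assoc]
      _ = Aᵀ := by rw [h1, mul_one]
  rw [cross_adjugate', hadj, transpose_transpose]

lemma dot_rot' (A : Matrix (Fin 3) (Fin 3) ℝ) (hA : Aᵀ * A = 1) (u v : Fin 3 → ℝ) :
    A.mulVec u ⬝ᵥ A.mulVec v = u ⬝ᵥ v := by
  rw [Matrix.dotProduct_mulVec, Matrix.vecMul_mulVec, hA, Matrix.vecMul_one]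

lemma triad_rot (A : Matrix (Fin 3) (Fin 3) ℝ) (hA : Aᵀ * A = 1) (hdet : A.det = 1)
    (g m : Fin 3 → ℝ) :
    triad (A.mulVec g) (A.mulVec m) = A * triad g m := by
  have hc := cross_rot' A hA hdet g m
  have hc2 := cross_rot' A hA hdet g (crossProduct g m)
  funext i j
  fin_cases j <;>
  · simp only [triad, Matrix.mul_apply, Matrix.of_apply, hc, hc2, dot_rot' A hA]
    simp [mulVec, dotProduct, Fin.sum_univ_three, Matrix.of_apply]
    ring

lemma lagrange (u v : Fin 3 → ℝ) :
    crossProduct u v ⬝ᵥ crossProduct u v = (u ⬝ᵥ u) * (v ⬝ᵥ v) - (u ⬝ᵥ v) ^ 2 := by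
  simp [cross_apply, dotProduct, Fin.sum_univ_three]; ring

lemma dot_cross_left (u v : Fin 3 → ℝ) : u ⬝ᵥ crossProduct u v = 0 := by
  simp [cross_apply, dotProduct, Fin.sum_univ_three]; ring

lemma offdiag_helper (a b : ℝ) (u v : Fin 3 → ℝ) (h : u ⬝ᵥ v = 0) :
    a * u 0 * (b * v 0) + a * u 1 * (b * v 1) + a * u 2 * (b * v 2) = 0 := by
  have hs : u 0 * v 0 + u 1 * v 1 + u 2 * v 2 = 0 := by
    simpa [dotProduct, Fin.sum_univ_three] using h
  linear_combination (a * b) * hs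

lemma diag_helper (u : Fin 3 → ℝ) (h : 0 < u ⬝ᵥ u) :
    (Real.sqrt (u 0 * u 0 + u 1 * u 1 + u 2 * u 2))⁻¹ * u 0 *
        ((Real.sqrt (u 0 * u 0 + u 1 * u 1 + u 2 * u 2))⁻¹ * u 0) +
      (Real.sqrt (u 0 * u 0 + u 1 * u 1 + u 2 * u 2))⁻¹ * u 1 *
        ((Real.sqrt (u 0 * u 0 + u 1 * u 1 + u 2 * u 2))⁻¹ * u 1) +
      (Real.sqrt (u 0 * u 0 + u 1 * u 1 + u 2 * u 2))⁻¹ * u 2 *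
        ((Real.sqrt (u 0 * u 0 + u 1 * u 1 + u 2 * u 2))⁻¹ * u 2) = 1 := by
  have hx : u 0 * u 0 + u 1 * u 1 + u 2 * u 2 = u ⬝ᵥ u := by
    simp [dotProduct, Fin.sum_univ_three]
  rw [hx]
  have h2 : (Real.sqrt (u ⬝ᵥ u))⁻¹ * (Real.sqrt (u ⬝ᵥ u))⁻¹ = (u ⬝ᵥ u)⁻¹ := by
    rw [← mul_inv, Real.mul_self_sqrt h.le]
  have h3 : (u ⬝ᵥ u)⁻¹ * (u ⬝ᵥ u) = 1 := inv_mul_cancel₀ h.ne'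
  have hd : u ⬝ᵥ u = u 0 * u 0 + u 1 * u 1 + u 2 * u 2 := hx.symm
  linear_combination (u 0 * u 0 + u 1 * u 1 + u 2 * u 2) * h2 + h3 - (u ⬝ᵥ u)⁻¹ * hd

lemma triad_orth (g m : Fin 3 → ℝ) (hg : g ≠ 0) (hgm : crossProduct g m ≠ 0) :
    triad g m * (triad g m)ᵀ = 1 := by
  rw [mul_eq_one_comm]
  set c := crossProduct g m with hc
  set w := crossProduct g c with hw
  have hgg : (0:ℝ) < g ⬝ᵥ g := by
    have := (Matrix.dotProduct_self_star_pos_iff (v := g)).2 (by simpa using hg)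
    simpa using this
  have hcc : (0:ℝ) < c ⬝ᵥ c := by
    have := (Matrix.dotProduct_self_star_pos_iff (v := c)).2 (by simpa [hc] using hgm)
    simpa using this
  have hgc : g ⬝ᵥ c = 0 := dot_cross_left g m
  have hww : (0:ℝ) < w ⬝ᵥ w := by
    rw [hw, lagrange g c, hgc]
    simpa using mul_pos hgg hcc
  have hgw : g ⬝ᵥ w = 0 := dot_cross_left g c
  have hcw : c ⬝ᵥ w = 0 := by
    simp [hc, hw, cross_apply, dotProduct, Fin.sum_univ_three]; ring
  have hdiag : ∀ x : ℝ, 0 < x → (Real.sqrt x)⁻¹ * ((Real.sqrt x)⁻¹ * x) = 1 := by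
    intro x hx
    rw [← mul_assoc, ← mul_inv, Real.mul_self_sqrt hx.le]
    field_simp
  set C : Fin 3 → Fin 3 → ℝ :=
    ![(Real.sqrt (g ⬝ᵥ g))⁻¹ • g, (Real.sqrt (c ⬝ᵥ c))⁻¹ • c, (Real.sqrt (w ⬝ᵥ w))⁻¹ • w]
    with hC
  have hcol : (triad g m)ᵀ * triad g m = Matrix.of fun i j => C i ⬝ᵥ C j := by
    ext i j
    simp [triad, Matrix.mul_apply, Matrix.transpose_apply, dotProduct, hC, ← hc, ← hw]
  rw [hcol]
  funext i j
  fin_cases i <;> fin_cases j <;>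
    simp [hC, Matrix.one_apply, dotProduct, Fin.sum_univ_three]
  · exact diag_helper g hgg
  · exact offdiag_helper _ _ g c hgc
  · exact offdiag_helper _ _ g w hgw
  · exact offdiag_helper _ _ c g ((dotProduct_comm c g).trans hgc)
  · exact diag_helper c hcc
  · exact offdiag_helper _ _ c w hcw
  · exact offdiag_helper _ _ w g ((dotProduct_comm w g).trans hgw)
  · exact offdiag_helper _ _ w c ((dotProduct_comm w c).trans hcw)
  · exact diag_helper w hww

/-- Attitude reconstruction: for noncollinear nonzero `gᴵ, mᴵ` and `R ∈ SO(3)`,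
with `gᴮ = Rᵀ gᴵ`, `mᴮ = Rᵀ mᴵ`, one has `M(gᴮ, mᴮ) M(gᴵ, mᴵ)ᵀ = Rᵀ`. -/
theorem attitude_reconstruction (gI mI : Fin 3 → ℝ)
    (hg : gI ≠ 0) (hm : mI ≠ 0) (hgm : crossProduct gI mI ≠ 0)
    (R : Matrix (Fin 3) (Fin 3) ℝ)
    (hR1 : R * Rᵀ = 1) (hR2 : Rᵀ * R = 1) (hdet : R.det = 1)
    (gB mB : Fin 3 → ℝ) (hgB : gB = Rᵀ.mulVec gI) (hmB : mB = Rᵀ.mulVec mI) :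
    triad gB mB * (triad gI mI)ᵀ = Rᵀ := by
  have hAT : (Rᵀ)ᵀ * Rᵀ = 1 := by rw [transpose_transpose]; exact hR1
  have hdetT : (Rᵀ).det = 1 := by rw [Matrix.det_transpose]; exact hdet
  rw [hgB, hmB, triad_rot Rᵀ hAT hdetT, mul_assoc, triad_orth gI mI hg hgm, mul_one]
end
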